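/- Assume (A1)–(A4) as in the robust cost-efficiency theorem and that F₀^{-1} ∘ F_{ℓ*}^{ℙ*} ∈ 𝔽, and let X* = F₀^{-1}(F_{ℓ*}^{ℙ*}(ℓ*)). Let ℙ ∈ 𝒫 be such that F_{ℓ^ℙ}^ℙ is continuous and such that X := F₀^{-1}(F_{ℓ^ℙ}^ℙ(ℓ^ℙ)) has finite ℚ-expectation. Then E_ℚ[X] ≤ E_ℚ[X*]; if moreover F_X^ℙ ≠ F_{X*}^ℙ, then E_ℚ[X] < E_ℚ[X*]. (Ambiguity increases the cost of reaching the target distribution F₀.) -/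

import Mathlib

open MeasureTheory Set Real

noncomputable section

/-- CDF of a distribution (measure) on `ℝ`. -/
def mcdf (μ : Measure ℝ) : ℝ → ℝ := fun x => (μ (Iic x)).toReal

/-- CDF of the random variable `X` under `P`. -/
def rvCdf {Ω : Type*} [MeasurableSpace Ω] (P : Measure Ω) (X : Ω → ℝ) : ℝ → ℝ :=
  mcdf (P.map X)

/-- Left-continuous quantile function of a distribution function `F`. -/
def quantile (F : ℝ → ℝ) (p : ℝ) : ℝ := sInf {x : ℝ | p ≤ F x}

/-- Integral stochastic ordering w.r.t. a class `𝔽`, between distributions on `ℝ`. -/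
def IntOrder (𝔽 : Set (ℝ → ℝ)) (μ ν : Measure ℝ) : Prop :=
  ∀ f ∈ 𝔽, Integrable f μ → Integrable f ν → ∫ x, f x ∂μ ≤ ∫ x, f x ∂ν

/-- Real-valued likelihood ratio `dP/dQ`. -/
def lr {Ω : Type*} [MeasurableSpace Ω] (P Q : Measure Ω) : Ω → ℝ :=
  fun ω => (P.rnDeriv Q ω).toReal

/-- A payoff: a nonnegative measurable random variable with finite `Q`-expectation. -/
def IsPayoff {Ω : Type*} [MeasurableSpace Ω] (Q : Measure Ω) (X : Ω → ℝ) : Prop :=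
  Measurable X ∧ (∀ ω, 0 ≤ X ω) ∧ Integrable X Q

/-- `X` is a `P`-cost-efficient payoff. -/
def CostEfficient {Ω : Type*} [MeasurableSpace Ω] (Q P : Measure Ω) (X : Ω → ℝ) : Prop :=
  IsPayoff Q X ∧ ∀ Y : Ω → ℝ, IsPayoff Q Y → P.map Y = P.map X →
    ∫ ω, X ω ∂Q ≤ ∫ ω, Y ω ∂Q

/-- Composition-consistency of `𝔽`. -/
def CompConsistent (𝔽 : Set (ℝ → ℝ)) : Prop := ∀ f ∈ 𝔽, ∀ g ∈ 𝔽, f ∘ g ∈ 𝔽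

/-- Cost-consistency of `𝔽`. -/
def CostConsistent {Ω : Type*} [MeasurableSpace Ω]
    (Q : Measure Ω) (Ps : Set (Measure Ω)) (𝔽 : Set (ℝ → ℝ)) : Prop :=
  ∀ P ∈ Ps, ∀ X Y : Ω → ℝ, CostEfficient Q P X → CostEfficient Q P Y →
    IntOrder 𝔽 (P.map X) (P.map Y) →
      (∫ ω, X ω ∂Q ≤ ∫ ω, Y ω ∂Q) ∧
      (P.map X ≠ P.map Y → ∫ ω, X ω ∂Q < ∫ ω, Y ω ∂Q)

/-- Admissible set `B_{F₀}^𝔽` of the `𝔽`-robust cost-efficiency problem, where the target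
distribution `F₀` is represented by the probability measure `μ₀` on `ℝ`. -/
def Bset {Ω : Type*} [MeasurableSpace Ω] (Q : Measure Ω) (Ps : Set (Measure Ω))
    (𝔽 : Set (ℝ → ℝ)) (μ₀ : Measure ℝ) : Set (Ω → ℝ) :=
  {X | IsPayoff Q X ∧ ∀ P ∈ Ps, IntOrder 𝔽 μ₀ (P.map X)}

/-!
Write `X*` for the robust payoff and `ν` for its law under `P`. The `P`-cost-efficient payoff
`Y = F_ν⁻¹(F_{ℓ^P}^P(ℓ^P))` with law `ν` is no more expensive than `X*`. Composing with
`F₀⁻¹ ∘ F_{ℓ*}^{P*} ∈ 𝔽`, least favourability of `P*` gives `F₀ ⪯_𝔽 ν`, and cost consistency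
applied to the `P`-cost-efficient payoffs `X` and `Y` yields `E_Q[X] ≤ E_Q[Y] ≤ E_Q[X*]`, strictly
if `F_X^P ≠ ν`.

That `F_ν⁻¹(F_ℓ(ℓ))` is cost-efficient is the Neyman–Pearson lemma applied to each upper level set:
the payoff is a nondecreasing function of `ℓ = dP/dQ` outside a `P`-null set, so its level sets
are threshold sets of `ℓ`, the `Q`-cheapest events of their `P`-probability. Finally
`E_Q[X*] = E_{P*}[X*/ℓ*] < ∞` by Cauchy–Schwarz, from (A1) and (A4).
-/

section Quantile

open ProbabilityTheory

lemma monotone_mcdf (ν : Measure ℝ) [IsFiniteMeasure ν] : Monotone (mcdf ν) :=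
  fun _ _ h => ENNReal.toReal_mono (measure_ne_top ν _) (measure_mono (Iic_subset_Iic.2 h))

lemma measurable_mcdf (ν : Measure ℝ) [IsFiniteMeasure ν] : Measurable (mcdf ν) :=
  (monotone_mcdf ν).measurable

variable (ν : Measure ℝ) [IsProbabilityMeasure ν]

lemma mcdf_eq_cdf : mcdf ν = cdf ν := by
  funext x
  rw [mcdf, cdf_eq_real, measureReal_def]

lemma mcdf_nonneg (x : ℝ) : 0 ≤ mcdf ν x := mcdf_eq_cdf ν ▸ cdf_nonneg ν x

lemma mcdf_le_one (x : ℝ) : mcdf ν x ≤ 1 := mcdf_eq_cdf ν ▸ cdf_le_one ν x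

lemma ofReal_mcdf (x : ℝ) : ENNReal.ofReal (mcdf ν x) = ν (Iic x) :=
  mcdf_eq_cdf ν ▸ ofReal_cdf ν x

lemma continuousWithinAt_mcdf_Ioi (x : ℝ) : ContinuousWithinAt (mcdf ν) (Ioi x) x :=
  mcdf_eq_cdf ν ▸ ((cdf ν).right_continuous x).mono Ioi_subset_Ici_self

variable {ν}

lemma nonempty_setOf_le_mcdf {p : ℝ} (hp : p < 1) : {x | p ≤ mcdf ν x}.Nonempty := by
  obtain ⟨x, hx⟩ :=
    ((mcdf_eq_cdf ν ▸ tendsto_cdf_atTop ν).eventually (eventually_gt_nhds hp)).exists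
  exact ⟨x, hx.le⟩

lemma bddBelow_setOf_le_mcdf {p : ℝ} (hp : 0 < p) : BddBelow {x | p ≤ mcdf ν x} := by
  obtain ⟨b, hb⟩ := Filter.eventually_atBot.mp
    ((mcdf_eq_cdf ν ▸ tendsto_cdf_atBot ν).eventually (eventually_lt_nhds hp))
  exact ⟨b, fun x hx => le_of_not_gt fun hxb => (hb x hxb.le).not_ge hx⟩

lemma quantile_le_iff {p : ℝ} (hp : p ∈ Ioo 0 1) (a : ℝ) :
    quantile (mcdf ν) p ≤ a ↔ p ≤ mcdf ν a := by
  refine ⟨fun h => ?_, fun h => csInf_le (bddBelow_setOf_le_mcdf hp.1) h⟩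
  refine ge_of_tendsto (continuousWithinAt_mcdf_Ioi ν a) (eventually_nhdsWithin_of_forall ?_)
  intro x hx
  obtain ⟨y, hy, hyx⟩ := exists_lt_of_csInf_lt (nonempty_setOf_le_mcdf hp.2) (h.trans_lt hx)
  exact hy.trans (monotone_mcdf ν hyx.le)

lemma monotoneOn_quantile : MonotoneOn (quantile (mcdf ν)) (Ioo 0 1) :=
  fun _ hp _ hq hpq => csInf_le_csInf (bddBelow_setOf_le_mcdf hp.1) (nonempty_setOf_le_mcdf hq.2)
    fun _ hx => hpq.trans hx

lemma quantile_eq_zero {p : ℝ} (hp : p ∉ Ioc 0 1) : quantile (mcdf ν) p = 0 := by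
  rcases le_or_gt p 0 with hp0 | hp0
  · have : {x | p ≤ mcdf ν x} = univ := eq_univ_of_forall fun x => hp0.trans (mcdf_nonneg ν x)
    rw [quantile, this, Real.sInf_of_not_bddBelow not_bddBelow_univ]
  · have : {x | p ≤ mcdf ν x} = ∅ :=
      eq_empty_of_forall_notMem fun x hx => hp ⟨hp0, hx.trans (mcdf_le_one ν x)⟩
    rw [quantile, this, Real.sInf_empty]

lemma quantile_nonneg (hν : ν (Iio 0) = 0) (p : ℝ) : 0 ≤ quantile (mcdf ν) p := by
  rcases le_or_gt p 0 with hp0 | hp0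
  · rw [quantile_eq_zero fun h => h.1.not_ge hp0]
  rcases eq_empty_or_nonempty {x | p ≤ mcdf ν x} with h | h
  · rw [quantile, h, Real.sInf_empty]
  refine le_csInf h fun x hx => le_of_not_gt fun hx0 => hp0.not_ge ?_
  have hx' : p ≤ (ν (Iic x)).toReal := hx
  rwa [measure_mono_null (Iic_subset_Iio.mpr hx0) hν, ENNReal.toReal_zero] at hx'

lemma measurable_quantile : Measurable (quantile (mcdf ν)) := by
  refine measurable_of_restrict_of_restrict_compl (measurableSet_Ioo (a := 0) (b := 1)) ?_ ?_
  · have : Monotone ((Ioo (0:ℝ) 1).domRestrict (quantile (mcdf ν))) :=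
      fun p q hpq => monotoneOn_quantile p.2 q.2 hpq
    exact this.measurable
  · have : (Ioo (0:ℝ) 1)ᶜ.domRestrict (quantile (mcdf ν)) =
        fun p : ↥(Ioo (0:ℝ) 1)ᶜ => if (p : ℝ) = 1 then quantile (mcdf ν) 1 else 0 := by
      funext ⟨p, hp⟩
      by_cases h1 : p = 1
      · simp [h1]
      · simp only [domRestrict_apply, if_neg h1]
        exact quantile_eq_zero fun h => hp ⟨h.1, h.2.lt_of_ne h1⟩
    rw [this]
    exact Measurable.ite (measurableSet_eq_fun measurable_subtype_coe measurable_const)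
      measurable_const measurable_const

lemma map_quantile_volume : (volume.restrict (Ioo (0:ℝ) 1)).map (quantile (mcdf ν)) = ν := by
  refine Measure.ext_of_Iic _ ν fun a => ?_
  have hset : quantile (mcdf ν) ⁻¹' Iic a ∩ Ioo 0 1 = Ioo 0 1 ∩ Iic (mcdf ν a) := by
    ext p
    simp only [mem_inter_iff, mem_preimage, mem_Iic]
    exact ⟨fun h => ⟨h.2, (quantile_le_iff h.2 a).1 h.1⟩,
      fun h => ⟨(quantile_le_iff h.1 a).2 h.2, h.1⟩⟩
  rw [Measure.map_apply measurable_quantile measurableSet_Iic,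
    Measure.restrict_apply (measurable_quantile measurableSet_Iic), hset,
    measure_congr ((Ioo_ae_eq_Ioc (μ := volume)).inter (ae_eq_refl (Iic (mcdf ν a)))),
    Ioc_inter_Iic, min_eq_right (mcdf_le_one ν a), Real.volume_Ioc, sub_zero, ofReal_mcdf]

lemma mcdf_quantile (hF : Continuous (mcdf ν)) {p : ℝ} (hp : p ∈ Ioo 0 1) :
    mcdf ν (quantile (mcdf ν) p) = p := by
  refine le_antisymm ?_ ((quantile_le_iff hp _).1 le_rfl)
  refine le_of_tendsto (hF.continuousWithinAt (s := Iio (quantile (mcdf ν) p)))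
    (eventually_nhdsWithin_of_forall fun x hx => ?_)
  exact (lt_of_not_ge fun h => hx.not_ge ((quantile_le_iff hp x).2 h)).le

lemma map_mcdf_self (hF : Continuous (mcdf ν)) : ν.map (mcdf ν) = volume.restrict (Ioo 0 1) := by
  calc ν.map (mcdf ν)
      = ((volume.restrict (Ioo 0 1)).map (quantile (mcdf ν))).map (mcdf ν) := by
        rw [map_quantile_volume]
    _ = (volume.restrict (Ioo 0 1)).map (mcdf ν ∘ quantile (mcdf ν)) :=
        Measure.map_map (measurable_mcdf ν) measurable_quantile
    _ = (volume.restrict (Ioo 0 1)).map id :=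
        Measure.map_congr (ae_restrict_of_forall_mem measurableSet_Ioo fun _ => mcdf_quantile hF)
    _ = volume.restrict (Ioo 0 1) := Measure.map_id

end Quantile

section RandomVariable

variable {Ω : Type*} [MeasurableSpace Ω] {P : Measure Ω} [IsProbabilityMeasure P] {Z : Ω → ℝ}

lemma map_rvCdf_comp (hZ : Measurable Z) (hF : Continuous (rvCdf P Z)) :
    P.map (fun ω => rvCdf P Z (Z ω)) = volume.restrict (Ioo 0 1) := by
  have := Measure.isProbabilityMeasure_map (μ := P) hZ.aemeasurable
  rw [← map_mcdf_self hF, rvCdf, Measure.map_map (measurable_mcdf _) hZ]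
  rfl

lemma map_quantile_rvCdf_comp (hZ : Measurable Z) (hF : Continuous (rvCdf P Z))
    (ν : Measure ℝ) [IsProbabilityMeasure ν] :
    P.map (fun ω => quantile (mcdf ν) (rvCdf P Z (Z ω))) = ν := by
  calc _ = (P.map fun ω => rvCdf P Z (Z ω)).map (quantile (mcdf ν)) :=
        (Measure.map_map measurable_quantile (hF.measurable.comp hZ)).symm
    _ = ν := by rw [map_rvCdf_comp hZ hF, map_quantile_volume]

lemma ae_rvCdf_comp_mem_Ioo (hZ : Measurable Z) (hF : Continuous (rvCdf P Z)) :
    ∀ᵐ ω ∂P, rvCdf P Z (Z ω) ∈ Ioo 0 1 := by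
  refine ae_of_ae_map (f := fun ω => rvCdf P Z (Z ω)) (hF.measurable.comp hZ).aemeasurable ?_
  rw [map_rvCdf_comp hZ hF]
  exact ae_restrict_mem measurableSet_Ioo

end RandomVariable

section NeymanPearson

variable {Ω : Type*} [MeasurableSpace Ω] {P Q : Measure Ω}

lemma measurable_lr : Measurable (lr P Q) := (Measure.measurable_rnDeriv P Q).ennreal_toReal

lemma lr_nonneg (ω : Ω) : 0 ≤ lr P Q ω := ENNReal.toReal_nonneg

lemma ae_lr_pos [SigmaFinite P] [SigmaFinite Q] (hPQ : P ≪ Q) : ∀ᵐ ω ∂P, 0 < lr P Q ω := by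
  filter_upwards [Measure.rnDeriv_pos hPQ, hPQ.ae_le (Measure.rnDeriv_lt_top P Q)] with ω h0 htop
  exact ENNReal.toReal_pos h0.ne' htop.ne

lemma setIntegral_le_setIntegral_of_nonneg_of_nonpos {μ : Measure Ω} {h : Ω → ℝ}
    (hh : Integrable h μ) {A B : Set Ω} (hA : MeasurableSet A)
    (hB : ∀ ω ∈ B, 0 ≤ h ω) (hBc : ∀ ω ∉ B, h ω ≤ 0) (hBm : MeasurableSet B) :
    ∫ ω in A, h ω ∂μ ≤ ∫ ω in B, h ω ∂μ := by
  rw [← integral_inter_add_sdiff hBm hh.integrableOn]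
  calc ∫ ω in A ∩ B, h ω ∂μ + ∫ ω in A \ B, h ω ∂μ ≤ ∫ ω in B, h ω ∂μ + 0 :=
      add_le_add (setIntegral_mono_set hh.integrableOn (ae_restrict_of_forall_mem hBm hB)
          inter_subset_right.eventuallyLE)
        (setIntegral_nonpos (hA.diff hBm) fun ω hω => hBc ω hω.2)
    _ = ∫ ω in B, h ω ∂μ := add_zero _

lemma integrable_lr [IsFiniteMeasure P] : Integrable (lr P Q) Q := Measure.integrable_toReal_rnDeriv

lemma setIntegral_lr [SigmaFinite P] [SigmaFinite Q] (hPQ : P ≪ Q) (C : Set Ω) :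
    ∫ ω in C, lr P Q ω ∂Q = P.real C :=
  Measure.setIntegral_toReal_rnDeriv hPQ C

variable [IsProbabilityMeasure P] [IsProbabilityMeasure Q]

lemma measure_le_of_lr_threshold (hPQ : P ≪ Q) (hQP : Q ≪ P) {A B : Set Ω}
    (hA : MeasurableSet A) (hB : MeasurableSet B) {s : ℝ} (hsB : ∀ ω ∈ B, s ≤ lr P Q ω)
    (hsBc : ∀ ω ∉ B, lr P Q ω ≤ s) (hPBA : P B ≤ P A) : Q B ≤ Q A := by
  rcases le_or_gt s 0 with hs | hs
  -- `B ⊇ {ℓ > 0}` is `P`-almost sure, hence so is `A`, and `A` is `Q`-almost sure.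
  · have hPBc : P Bᶜ = 0 := measure_mono_null (fun ω hω => (hsBc ω hω).trans hs |>.not_gt)
      (ae_iff.1 (ae_lr_pos hPQ))
    have hPA : P A = 1 :=
      le_antisymm prob_le_one (((prob_compl_eq_zero_iff hB).1 hPBc).symm.le.trans hPBA)
    rw [(prob_compl_eq_zero_iff hA).1 (hQP ((prob_compl_eq_zero_iff hA).2 hPA))]
    exact prob_le_one
  have hcost : ∀ C, MeasurableSet C → ∫ ω in C, (lr P Q ω - s) ∂Q = P.real C - s * Q.real C := by
    intro C hC
    rw [integral_sub integrable_lr.integrableOn (integrable_const s).integrableOn,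
      setIntegral_lr hPQ C, setIntegral_const, smul_eq_mul, mul_comm]
  -- Neyman–Pearson: `(𝟙_B - 𝟙_A) (ℓ - s) ≥ 0` pointwise.
  have key := setIntegral_le_setIntegral_of_nonneg_of_nonpos (h := fun ω => lr P Q ω - s)
    (integrable_lr.sub (integrable_const s)) hA
    (fun ω hω => sub_nonneg.2 (hsB ω hω)) (fun ω hω => sub_nonpos.2 (hsBc ω hω)) hB
  rw [hcost A hA, hcost B hB] at key
  have hP : P.real B ≤ P.real A := ENNReal.toReal_mono (measure_ne_top P A) hPBA
  have hQ : Q.real B ≤ Q.real A := le_of_mul_le_mul_left (by linarith) hs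
  exact (ENNReal.toReal_le_toReal (measure_ne_top Q B) (measure_ne_top Q A)).1 hQ

lemma measure_lr_preimage_le (hPQ : P ≪ Q) (hQP : Q ≪ P) {U : Set ℝ} (hU : IsUpperSet U)
    {A : Set Ω} (hA : MeasurableSet A) (hPA : P (lr P Q ⁻¹' U) ≤ P A) :
    Q (lr P Q ⁻¹' U) ≤ Q A := by
  have hUm : MeasurableSet (lr P Q ⁻¹' U) := measurable_lr hU.ordConnected.measurableSet
  rcases U.eq_empty_or_nonempty with rfl | hne
  · simp
  by_cases hbdd : BddBelow U
  · refine measure_le_of_lr_threshold hPQ hQP hA hUm (s := sInf U)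
      (fun ω hω => csInf_le hbdd hω) (fun ω hω => le_csInf hne fun x hx => ?_) hPA
    exact not_lt.1 fun hlt => hω (hU hlt.le hx)
  · have hUuniv : U = univ := eq_univ_of_forall fun x =>
      let ⟨y, hy, hyx⟩ := not_bddBelow_iff.1 hbdd x
      hU hyx.le hy
    subst hUuniv
    exact measure_le_of_lr_threshold hPQ hQP hA hUm (s := 0) (fun ω _ => lr_nonneg ω)
      (fun ω hω => absurd (mem_univ _) hω) hPA

lemma lintegral_comp_lr_le_of_map_eq (hPQ : P ≪ Q) (hQP : Q ≪ P) {g : ℝ → ℝ} {S : Set ℝ}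
    (hgm : Measurable g) (hg0 : ∀ x, 0 ≤ g x) (hg : MonotoneOn g S)
    (hS : ∀ᵐ ω ∂P, lr P Q ω ∈ S) {Y : Ω → ℝ} (hYm : Measurable Y) (hY0 : ∀ ω, 0 ≤ Y ω)
    (hmap : P.map Y = P.map (fun ω => g (lr P Q ω))) :
    ∫⁻ ω, ENNReal.ofReal (g (lr P Q ω)) ∂Q ≤ ∫⁻ ω, ENNReal.ofReal (Y ω) ∂Q := by
  have hXm : Measurable fun ω => g (lr P Q ω) := hgm.comp measurable_lr
  rw [lintegral_eq_lintegral_meas_lt Q (ae_of_all _ fun ω => hg0 _) hXm.aemeasurable,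
    lintegral_eq_lintegral_meas_lt Q (ae_of_all _ hY0) hYm.aemeasurable]
  refine lintegral_mono fun t => ?_
  -- Since `g` is monotone on `S`, up to a `P`-null set `{t < g ∘ ℓ}` is `{ℓ ∈ U}` for an upper set.
  set U : Set ℝ := ↑(upperClosure {x | x ∈ S ∧ t < g x})
  have hXU : {ω | t < g (lr P Q ω)} =ᵐ[P] lr P Q ⁻¹' U := by
    filter_upwards [hS] with ω hω
    refine propext ⟨fun h => mem_upperClosure.2 ⟨_, ⟨hω, h⟩, le_rfl⟩, fun h => ?_⟩
    obtain ⟨x, ⟨hxS, hx⟩, hxω⟩ := mem_upperClosure.1 h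
    exact hx.trans_le (hg hxS hω hxω)
  have hPY : P {ω | t < g (lr P Q ω)} = P {ω | t < Y ω} := by
    have := congrArg (· (Ioi t)) hmap
    simp only [Measure.map_apply hYm measurableSet_Ioi,
      Measure.map_apply hXm measurableSet_Ioi] at this
    exact this.symm
  calc Q {ω | t < g (lr P Q ω)} = Q (lr P Q ⁻¹' U) := measure_congr (hQP.ae_eq hXU)
    _ ≤ Q {ω | t < Y ω} := measure_lr_preimage_le hPQ hQP (upperClosure _).upper
        (hYm measurableSet_Ioi) (by rw [← measure_congr hXU, hPY])

end NeymanPearson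

lemma IntOrder.map {𝔽 : Set (ℝ → ℝ)} {μ ν : Measure ℝ} (h : IntOrder 𝔽 μ ν) {g : ℝ → ℝ}
    (hg : Measurable g) (h𝔽 : ∀ f ∈ 𝔽, f ∘ g ∈ 𝔽) : IntOrder 𝔽 (μ.map g) (ν.map g) := by
  intro f hf hμ hν
  rw [integral_map hg.aemeasurable hμ.aestronglyMeasurable,
    integral_map hg.aemeasurable hν.aestronglyMeasurable]
  exact h (f ∘ g) (h𝔽 f hf)
    ((integrable_map_measure hμ.aestronglyMeasurable hg.aemeasurable).1 hμ)
    ((integrable_map_measure hν.aestronglyMeasurable hg.aemeasurable).1 hν)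

section CostEfficientPayoff

variable {Ω : Type*} [MeasurableSpace Ω] {P Q : Measure Ω}

def costEfficientPayoff (P Q : Measure Ω) (ν : Measure ℝ) : Ω → ℝ :=
  fun ω => quantile (mcdf ν) (rvCdf P (lr P Q) (lr P Q ω))

variable {ν : Measure ℝ} [IsProbabilityMeasure ν]

lemma costEfficientPayoff_nonneg (hν : ν (Iio 0) = 0) (ω : Ω) :
    0 ≤ costEfficientPayoff P Q ν ω :=
  quantile_nonneg hν _

variable [IsProbabilityMeasure P]

lemma measurable_costEfficientPayoff : Measurable (costEfficientPayoff P Q ν) :=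
  measurable_quantile.comp ((measurable_mcdf _).comp measurable_lr)

lemma map_costEfficientPayoff (hF : Continuous (rvCdf P (lr P Q))) :
    P.map (costEfficientPayoff P Q ν) = ν :=
  map_quantile_rvCdf_comp measurable_lr hF ν

lemma memLp_costEfficientPayoff (hF : Continuous (rvCdf P (lr P Q)))
    (hsq : IntegrableOn (fun u => (quantile (mcdf ν) u) ^ 2) (Ioo 0 1) volume) :
    MemLp (costEfficientPayoff P Q ν) 2 P := by
  have hq : MemLp (quantile (mcdf ν)) 2 (volume.restrict (Ioo 0 1)) :=
    (memLp_two_iff_integrable_sq measurable_quantile.aestronglyMeasurable).2 hsq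
  rw [← map_rvCdf_comp measurable_lr hF] at hq
  exact (memLp_map_measure_iff measurable_quantile.aestronglyMeasurable
    (hF.measurable.comp measurable_lr).aemeasurable).1 hq

variable [IsProbabilityMeasure Q]

lemma integrable_of_memLp_two (hPQ : P ≪ Q) (hQP : Q ≪ P) {X : Ω → ℝ} (hX : MemLp X 2 P)
    (hℓ : MemLp (fun ω => 1 / lr P Q ω) 2 P) : Integrable X Q := by
  rw [← integrable_toReal_rnDeriv_mul_iff hQP]
  refine (hℓ.integrable_mul hX).congr ?_
  filter_upwards [Measure.inv_rnDeriv hPQ] with ω hω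
  simp [lr, ← hω, ENNReal.toReal_inv]

variable (hPQ : P ≪ Q) (hQP : Q ≪ P) (hF : Continuous (rvCdf P (lr P Q))) (hν : ν (Iio 0) = 0)
include hPQ hQP hF hν

lemma lintegral_costEfficientPayoff_le {Y : Ω → ℝ} (hYm : Measurable Y) (hY0 : ∀ ω, 0 ≤ Y ω)
    (hYν : P.map Y = ν) :
    ∫⁻ ω, ENNReal.ofReal (costEfficientPayoff P Q ν ω) ∂Q ≤ ∫⁻ ω, ENNReal.ofReal (Y ω) ∂Q :=
  lintegral_comp_lr_le_of_map_eq hPQ hQP (S := rvCdf P (lr P Q) ⁻¹' Ioo 0 1)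
    (measurable_quantile.comp (measurable_mcdf _)) (fun _ => quantile_nonneg hν _)
    (fun _ hx _ hy hxy => monotoneOn_quantile hx hy (monotone_mcdf _ hxy))
    (ae_rvCdf_comp_mem_Ioo measurable_lr hF) hYm hY0
    (hYν.trans (map_costEfficientPayoff hF).symm)

lemma integrable_costEfficientPayoff {Y : Ω → ℝ} (hY : IsPayoff Q Y) (hYν : P.map Y = ν) :
    Integrable (costEfficientPayoff P Q ν) Q :=
  ⟨measurable_costEfficientPayoff.aestronglyMeasurable,
    (hasFiniteIntegral_iff_ofReal (ae_of_all _ (costEfficientPayoff_nonneg hν))).2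
      ((lintegral_costEfficientPayoff_le hPQ hQP hF hν hY.1 hY.2.1 hYν).trans_lt
        hY.2.2.lintegral_lt_top)⟩

lemma integral_costEfficientPayoff_le {Y : Ω → ℝ} (hY : IsPayoff Q Y) (hYν : P.map Y = ν) :
    ∫ ω, costEfficientPayoff P Q ν ω ∂Q ≤ ∫ ω, Y ω ∂Q := by
  rw [integral_eq_lintegral_of_nonneg_ae (ae_of_all _ (costEfficientPayoff_nonneg hν))
      measurable_costEfficientPayoff.aestronglyMeasurable,
    integral_eq_lintegral_of_nonneg_ae (ae_of_all _ hY.2.1) hY.1.aestronglyMeasurable]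
  exact ENNReal.toReal_mono hY.2.2.lintegral_lt_top.ne
    (lintegral_costEfficientPayoff_le hPQ hQP hF hν hY.1 hY.2.1 hYν)

lemma costEfficient_costEfficientPayoff (hint : Integrable (costEfficientPayoff P Q ν) Q) :
    CostEfficient Q P (costEfficientPayoff P Q ν) :=
  ⟨⟨measurable_costEfficientPayoff, costEfficientPayoff_nonneg hν, hint⟩, fun _ hY hYX =>
    integral_costEfficientPayoff_le hPQ hQP hF hν hY (hYX.trans (map_costEfficientPayoff hF))⟩

end CostEfficientPayoff

theorem stmt6_general {Ω : Type*} [MeasurableSpace Ω]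
    (Q : Measure Ω) [IsProbabilityMeasure Q]
    (Ps : Set (Measure Ω))
    (hPsprob : ∀ P ∈ Ps, IsProbabilityMeasure P)
    (hPsequiv : ∀ P ∈ Ps, P ≪ Q ∧ Q ≪ P)
    (𝔽 : Set (ℝ → ℝ))
    -- (A1)
    (μ₀ : Measure ℝ) (hμ₀ : IsProbabilityMeasure μ₀)
    (hsupp : μ₀ (Iio 0) = 0)
    (hsq : IntegrableOn (fun u => (quantile (mcdf μ₀) u) ^ 2) (Ioo (0:ℝ) 1) volume)
    -- (A2)
    (hcomp : CompConsistent 𝔽) (hcost : CostConsistent Q Ps 𝔽)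
    -- (A3)
    (Pstar : Measure Ω) (hPstar : Pstar ∈ Ps)
    (hLF : ∀ P ∈ Ps, IntOrder 𝔽 (Pstar.map (lr Pstar Q)) (P.map (lr Pstar Q)))
    -- (A4)
    (hcont : Continuous (rvCdf Pstar (lr Pstar Q)))
    (hvar : Integrable (fun ω => (1 / lr Pstar Q ω) ^ 2) Pstar)
    -- `F₀⁻¹ ∘ F_{ℓ*}^{P*} ∈ 𝔽`
    (hqf : (fun x => quantile (mcdf μ₀) (rvCdf Pstar (lr Pstar Q) x)) ∈ 𝔽)
    -- the unambiguous investor's measure `P ∈ Ps`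
    (P : Measure Ω) (hP : P ∈ Ps)
    (hcontP : Continuous (rvCdf P (lr P Q)))
    (hXint : Integrable (fun ω => quantile (mcdf μ₀) (rvCdf P (lr P Q) (lr P Q ω))) Q) :
    (∫ ω, quantile (mcdf μ₀) (rvCdf P (lr P Q) (lr P Q ω)) ∂Q ≤
      ∫ ω, quantile (mcdf μ₀) (rvCdf Pstar (lr Pstar Q) (lr Pstar Q ω)) ∂Q) ∧
    (P.map (fun ω => quantile (mcdf μ₀) (rvCdf P (lr P Q) (lr P Q ω))) ≠
        P.map (fun ω => quantile (mcdf μ₀) (rvCdf Pstar (lr Pstar Q) (lr Pstar Q ω))) →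
      ∫ ω, quantile (mcdf μ₀) (rvCdf P (lr P Q) (lr P Q ω)) ∂Q <
        ∫ ω, quantile (mcdf μ₀) (rvCdf Pstar (lr Pstar Q) (lr Pstar Q ω)) ∂Q) := by
  have := hPsprob P hP
  have := hPsprob Pstar hPstar
  obtain ⟨hPQ, hQP⟩ := hPsequiv P hP
  obtain ⟨hPsQ, hQPs⟩ := hPsequiv Pstar hPstar
  have hXs : IsPayoff Q (costEfficientPayoff Pstar Q μ₀) :=
    ⟨measurable_costEfficientPayoff, costEfficientPayoff_nonneg hsupp,
      integrable_of_memLp_two hPsQ hQPs (memLp_costEfficientPayoff hcont hsq)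
        ((memLp_two_iff_integrable_sq (measurable_const.div measurable_lr).aestronglyMeasurable).2
          hvar)⟩
  set ν := P.map (costEfficientPayoff Pstar Q μ₀)
  have : IsProbabilityMeasure ν := Measure.isProbabilityMeasure_map hXs.1.aemeasurable
  have hν : ν (Iio 0) = 0 := by
    rw [Measure.map_apply hXs.1 measurableSet_Iio]
    exact measure_mono_null (fun ω hω => (not_lt.2 (hXs.2.1 ω) hω).elim) measure_empty
  have hYXs := integral_costEfficientPayoff_le hPQ hQP hcontP hν hXs rfl
  have hXce := costEfficient_costEfficientPayoff hPQ hQP hcontP hsupp hXint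
  have hYce := costEfficient_costEfficientPayoff hPQ hQP hcontP hν
    (integrable_costEfficientPayoff hPQ hQP hcontP hν hXs rfl)
  have hord :
      IntOrder 𝔽 (P.map (costEfficientPayoff P Q μ₀)) (P.map (costEfficientPayoff P Q ν)) := by
    have hg := (measurable_quantile (ν := μ₀)).comp (measurable_mcdf (Pstar.map (lr Pstar Q)))
    rw [map_costEfficientPayoff hcontP, map_costEfficientPayoff hcontP,
      ← map_costEfficientPayoff (ν := μ₀) hcont]
    convert (hLF P hP).map hg (fun f hf => hcomp f hf _ hqf) using 1 <;>
      exact (Measure.map_map hg measurable_lr).symm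
  obtain ⟨hle, hlt⟩ := hcost P hP _ _ hXce hYce hord
  exact ⟨hle.trans hYXs,
    fun hne => (hlt fun h => hne (h.trans (map_costEfficientPayoff hcontP))).trans_le hYXs⟩

/-- ambiguity increases the cost: under the assumptions of the robust
cost-efficiency theorem, for `P ∈ Ps` with continuous `F_{ℓ^P}^P`, the cost of the
classical cost-efficient payoff `X = F₀⁻¹(F_{ℓ^P}^P(ℓ^P))` is at most that of the robust
cost-efficient payoff `X* = F₀⁻¹(F_{ℓ*}^{P*}(ℓ*))`, strictly if `F_X^P ≠ F_{X*}^P`. -/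
theorem stmt6 {Ω : Type*} [MeasurableSpace Ω]
    (Q : Measure Ω) [IsProbabilityMeasure Q] (r T : ℝ) (hT : 0 < T)
    (Ps : Set (Measure Ω))
    (hPsprob : ∀ P ∈ Ps, IsProbabilityMeasure P)
    (hPsequiv : ∀ P ∈ Ps, P ≪ Q ∧ Q ≪ P)
    (𝔽 : Set (ℝ → ℝ)) (h𝔽meas : ∀ f ∈ 𝔽, Measurable (fun x : Ici (0:ℝ) => f x))
    -- (A1)
    (μ₀ : Measure ℝ) (hμ₀ : IsProbabilityMeasure μ₀)
    (hsupp : μ₀ (Iio 0) = 0)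
    (hsq : IntegrableOn (fun u => (quantile (mcdf μ₀) u) ^ 2) (Ioo (0:ℝ) 1) volume)
    -- (A2)
    (hcomp : CompConsistent 𝔽) (hcost : CostConsistent Q Ps 𝔽)
    -- (A3)
    (Pstar : Measure Ω) (hPstar : Pstar ∈ Ps)
    (hLF : ∀ P ∈ Ps, IntOrder 𝔽 (Pstar.map (lr Pstar Q)) (P.map (lr Pstar Q)))
    -- (A4)
    (hcont : Continuous (rvCdf Pstar (lr Pstar Q)))
    (hvar : Integrable (fun ω => (1 / lr Pstar Q ω) ^ 2) Pstar)
    -- `F₀⁻¹ ∘ F_{ℓ*}^{P*} ∈ 𝔽`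
    (hqf : (fun x => quantile (mcdf μ₀) (rvCdf Pstar (lr Pstar Q) x)) ∈ 𝔽)
    -- the unambiguous investor's measure `P ∈ Ps`
    (P : Measure Ω) (hP : P ∈ Ps)
    (hcontP : Continuous (rvCdf P (lr P Q)))
    (hXint : Integrable (fun ω => quantile (mcdf μ₀) (rvCdf P (lr P Q) (lr P Q ω))) Q) :
    (∫ ω, quantile (mcdf μ₀) (rvCdf P (lr P Q) (lr P Q ω)) ∂Q ≤
      ∫ ω, quantile (mcdf μ₀) (rvCdf Pstar (lr Pstar Q) (lr Pstar Q ω)) ∂Q) ∧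
    (P.map (fun ω => quantile (mcdf μ₀) (rvCdf P (lr P Q) (lr P Q ω))) ≠
        P.map (fun ω => quantile (mcdf μ₀) (rvCdf Pstar (lr Pstar Q) (lr Pstar Q ω))) →
      ∫ ω, quantile (mcdf μ₀) (rvCdf P (lr P Q) (lr P Q ω)) ∂Q <
        ∫ ω, quantile (mcdf μ₀) (rvCdf Pstar (lr Pstar Q) (lr Pstar Q ω)) ∂Q) :=
  stmt6_general Q Ps hPsprob hPsequiv 𝔽 μ₀ hμ₀ hsupp hsq hcomp hcost Pstar hPstar hLF hcont hvar hqf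
    P hP hcontP hXint
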